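/- Let b > 0, d > 1, ν ∈ ℕ₀, m ∈ ℤⁿ and R > 0, and let E ⊂ d·Q_{ν,m} be a Lebesgue-measurable set. Then for every x ∈ E one has (η_{ν,R} ∗ χ_{Q_{ν,m}})(x) = ∫_{Q_{ν,m}} 2^{nν}(1 + 2^ν|x − y|)^{−R} dy ≥ (1 + (1+d)√n)^{−R}. In particular, χ_E(x) ≤ c·(η_{ν,R} ∗ χ_{Q_{ν,m}})(x) for all x ∈ ℝⁿ, with the constant c = (1 + (1+d)√n)^{R} independent of ν and m. -/

import Mathlib

open MeasureTheory

noncomputable section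

/-- The closed axis-parallel cube in `ℝⁿ` centered at `z` with side length `l`. -/
def cube (n : ℕ) (z : EuclideanSpace ℝ (Fin n)) (l : ℝ) : Set (EuclideanSpace ℝ (Fin n)) :=
  {y | ∀ i, |y i - z i| ≤ l / 2}

/-- The lattice point `2^{-ν} m ∈ ℝⁿ`. -/
def latticePt (n : ℕ) (ν : ℕ) (m : Fin n → ℤ) : EuclideanSpace ℝ (Fin n) :=
  WithLp.toLp 2 (fun i => (2 : ℝ) ^ (-(ν : ℤ)) * (m i : ℝ))

/-!
For `x ∈ d·Q` and `y ∈ Q` every coordinate of `x - y` is at most `(1 + d) 2^{-ν} / 2`, so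
`2^ν |x - y| ≤ (1 + d) √n / 2`. As `R > 0`, the kernel is therefore at least
`2^{nν} (1 + (1 + d) √n)^{-R}` on all of `Q`, and `Q` has volume `2^{-nν}`.
-/

open Set

lemma cube_eq_preimage_ofLp (n : ℕ) (z : EuclideanSpace ℝ (Fin n)) (l : ℝ) :
    cube n z l = WithLp.ofLp ⁻¹' univ.pi fun i => Icc (z i - l / 2) (z i + l / 2) := by
  ext y
  simp only [cube, mem_ofPred_eq, mem_preimage, mem_univ_pi, mem_Icc, abs_le]
  refine forall_congr' fun i => ?_
  constructor <;> rintro ⟨h₁, h₂⟩ <;> constructor <;> linarith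

lemma isCompact_cube (n : ℕ) (z : EuclideanSpace ℝ (Fin n)) (l : ℝ) :
    IsCompact (cube n z l) := by
  rw [cube_eq_preimage_ofLp]
  exact (EuclideanSpace.equiv (Fin n) ℝ).toHomeomorph.isCompact_preimage.2
    (isCompact_univ_pi fun _ => isCompact_Icc)

lemma volume_cube (n : ℕ) (z : EuclideanSpace ℝ (Fin n)) (l : ℝ) :
    volume (cube n z l) = ENNReal.ofReal l ^ n := by
  rw [cube_eq_preimage_ofLp, (PiLp.volume_preserving_ofLp (Fin n)).measure_preimage
    (MeasurableSet.univ_pi fun _ => measurableSet_Icc).nullMeasurableSet, volume_pi_pi]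
  simp [Real.volume_Icc]

lemma EuclideanSpace.norm_le_sqrt_card_mul {ι : Type*} [Fintype ι] {v : EuclideanSpace ℝ ι}
    {c : ℝ} (h : ∀ i, |v i| ≤ c) : ‖v‖ ≤ √(Fintype.card ι) * c := by
  rcases isEmpty_or_nonempty ι with hι | ⟨⟨i₀⟩⟩
  · simp [Subsingleton.elim v 0]
  have hc : 0 ≤ c := (abs_nonneg _).trans (h i₀)
  calc ‖v‖ = √(∑ i, |v i| ^ 2) := by simp [EuclideanSpace.norm_eq]
    _ ≤ √(∑ _ : ι, c ^ 2) := by gcongr with i; exact h i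
    _ = √(Fintype.card ι) * c := by simp [Real.sqrt_mul, Real.sqrt_sq hc]

lemma norm_sub_le_of_mem_cube {n : ℕ} {x y z : EuclideanSpace ℝ (Fin n)} {l₁ l₂ : ℝ}
    (hx : x ∈ cube n z l₁) (hy : y ∈ cube n z l₂) : ‖x - y‖ ≤ √n * ((l₁ + l₂) / 2) := by
  have hcoord : ∀ i, |(x - y) i| ≤ (l₁ + l₂) / 2 := fun i =>
    calc |(x - y) i| = |(x i - z i) - (y i - z i)| := by simp
      _ ≤ |x i - z i| + |y i - z i| := abs_sub _ _
      _ ≤ (l₁ + l₂) / 2 := by linarith [hx i, hy i]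
  simpa using EuclideanSpace.norm_le_sqrt_card_mul hcoord

theorem rpow_neg_le_setIntegral_cube {n : ℕ} {x z : EuclideanSpace ℝ (Fin n)} {d s R : ℝ}
    (hs : 0 < s) (hR : 0 ≤ R) (hx : x ∈ cube n z (d * s⁻¹)) :
    (1 + (1 + d) * √n) ^ (-R) ≤ ∫ y in cube n z s⁻¹, s ^ n * (1 + s * ‖x - y‖) ^ (-R) := by
  set A := 1 + (1 + d) * √n
  have hbase : ∀ y ∈ cube n z s⁻¹, 1 + s * ‖x - y‖ ≤ A := by
    intro y hy
    have h := mul_le_mul_of_nonneg_left (norm_sub_le_of_mem_cube hx hy) hs.le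
    have h' : s * (√n * ((d * s⁻¹ + s⁻¹) / 2)) = (1 + d) * √n / 2 := by field_simp; ring
    have : 0 ≤ s * ‖x - y‖ := by positivity
    linarith
  have hlow : ∀ y ∈ cube n z s⁻¹, s ^ n * A ^ (-R) ≤ s ^ n * (1 + s * ‖x - y‖) ^ (-R) :=
    fun y hy => mul_le_mul_of_nonneg_left
      (Real.rpow_le_rpow_of_nonpos (by positivity) (hbase y hy) (by linarith)) (by positivity)
  have hcont : Continuous fun y => s ^ n * (1 + s * ‖x - y‖) ^ (-R) :=
    continuous_const.mul (Continuous.rpow_const (by fun_prop) fun _ => Or.inl (by positivity))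
  have hvol : volume.real (cube n z s⁻¹) = (s⁻¹) ^ n := by
    simp [measureReal_def, volume_cube, hs.le]
  have hcube := isCompact_cube n z s⁻¹
  have := setIntegral_ge_of_const_le_real hcube.isClosed.measurableSet
    (hcube.measure_lt_top (μ := volume)).ne hlow (hcont.continuousOn.integrableOn_compact hcube)
  rwa [hvol, mul_right_comm, ← mul_pow, mul_inv_cancel₀ hs.ne', one_pow, one_mul] at this

lemma indicator_le_rpow_mul_of_rpow_neg_le {α : Type*} {E : Set α} {F : α → ℝ} {A R : ℝ}
    (hA : 0 < A) (hF : ∀ x, 0 ≤ F x) (h : ∀ x ∈ E, A ^ (-R) ≤ F x) (x : α) :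
    E.indicator (fun _ => (1 : ℝ)) x ≤ A ^ R * F x := by
  by_cases hx : x ∈ E
  · calc E.indicator (fun _ => (1 : ℝ)) x = A ^ R * A ^ (-R) := by
          rw [indicator_of_mem hx, ← Real.rpow_add hA, add_neg_cancel, Real.rpow_zero]
      _ ≤ A ^ R * F x := by gcongr; exact h x hx
  · rw [indicator_of_notMem hx]
    exact mul_nonneg (Real.rpow_nonneg hA.le R) (hF x)

theorem stmt_3_general (n : ℕ) (d : ℝ) (hd : 1 < d) (ν : ℕ)
    (xc : EuclideanSpace ℝ (Fin n))
    (R : ℝ) (hR : 0 < R)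
    (E : Set (EuclideanSpace ℝ (Fin n)))
    (hEQ : E ⊆ cube n xc (d * (2 : ℝ) ^ (-(ν : ℤ)))) :
    (∀ x ∈ E,
        (1 + (1 + d) * Real.sqrt n) ^ (-R)
          ≤ ∫ y in cube n xc ((2 : ℝ) ^ (-(ν : ℤ))),
              (2 : ℝ) ^ (n * ν) * (1 + (2 : ℝ) ^ ν * ‖x - y‖) ^ (-R)) ∧
    (∀ x : EuclideanSpace ℝ (Fin n),
        E.indicator (fun _ => (1 : ℝ)) x
          ≤ (1 + (1 + d) * Real.sqrt n) ^ R *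
            ∫ y in cube n xc ((2 : ℝ) ^ (-(ν : ℤ))),
              (2 : ℝ) ^ (n * ν) * (1 + (2 : ℝ) ^ ν * ‖x - y‖) ^ (-R)) := by
  have hscale : (2 : ℝ) ^ (-(ν : ℤ)) = ((2 : ℝ) ^ ν)⁻¹ := by rw [zpow_neg, zpow_natCast]
  have hpow : (2 : ℝ) ^ (n * ν) = ((2 : ℝ) ^ ν) ^ n := by rw [← pow_mul, mul_comm]
  rw [hscale] at hEQ ⊢
  rw [hpow]
  have hlower : ∀ x ∈ E, (1 + (1 + d) * √n) ^ (-R) ≤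
      ∫ y in cube n xc ((2 : ℝ) ^ ν)⁻¹, ((2 : ℝ) ^ ν) ^ n * (1 + 2 ^ ν * ‖x - y‖) ^ (-R) :=
    fun x hx => rpow_neg_le_setIntegral_cube (by positivity) hR.le (hEQ hx)
  refine ⟨hlower, indicator_le_rpow_mul_of_rpow_neg_le ?_ (fun x => ?_) hlower⟩
  · have : 0 ≤ 1 + d := by linarith
    positivity
  · exact setIntegral_nonneg (isCompact_cube n xc _).isClosed.measurableSet
      fun y _ => by positivity

/-- If `E ⊆ d·Q_{ν,m}` is measurable, then for every `x ∈ E` one has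
`(η_{ν,R} ∗ χ_{Q_{ν,m}})(x) ≥ (1+(1+d)√n)^{-R}`; in particular
`χ_E ≤ (1+(1+d)√n)^{R} · (η_{ν,R} ∗ χ_{Q_{ν,m}})` pointwise on `ℝⁿ`. -/
theorem stmt_3 (n : ℕ) (b d : ℝ) (hb : 0 < b) (hd : 1 < d) (ν : ℕ) (m : Fin n → ℤ)
    (xc : EuclideanSpace ℝ (Fin n))
    (hxc : ‖xc - latticePt n ν m‖ ≤ b * (2 : ℝ) ^ (-(ν : ℤ)))
    (R : ℝ) (hR : 0 < R)
    (E : Set (EuclideanSpace ℝ (Fin n))) (hEmeas : MeasurableSet E)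
    (hEQ : E ⊆ cube n xc (d * (2 : ℝ) ^ (-(ν : ℤ)))) :
    (∀ x ∈ E,
        (1 + (1 + d) * Real.sqrt n) ^ (-R)
          ≤ ∫ y in cube n xc ((2 : ℝ) ^ (-(ν : ℤ))),
              (2 : ℝ) ^ (n * ν) * (1 + (2 : ℝ) ^ ν * ‖x - y‖) ^ (-R)) ∧
    (∀ x : EuclideanSpace ℝ (Fin n),
        E.indicator (fun _ => (1 : ℝ)) x
          ≤ (1 + (1 + d) * Real.sqrt n) ^ R *
            ∫ y in cube n xc ((2 : ℝ) ^ (-(ν : ℤ))),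
              (2 : ℝ) ^ (n * ν) * (1 + (2 : ℝ) ^ ν * ‖x - y‖) ^ (-R)) :=
  stmt_3_general n d hd ν xc R hR E hEQ
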